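/- In a Veldkamp n-gon, for any two edges e_1 and e_2 there exists an edge opposite to both of them. -/

import Mathlib

/-- A Veldkamp graph: a graph endowed, at each vertex `v`, with a symmetric
anti-reflexive "local opposition" relation `opp v` on the neighborhood of `v`
that is 2-plump. -/
structure VeldkampGraph (V : Type*) where
  adj : V → V → Prop
  adj_symm : ∀ u v, adj u v → adj v u
  adj_irrefl : ∀ v, ¬ adj v v
  opp : V → V → V → Prop
  opp_adj_left : ∀ v x y, opp v x y → adj v x
  opp_adj_right : ∀ v x y, opp v x y → adj v y
  opp_symm : ∀ v x y, opp v x y → opp v y x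
  opp_irrefl : ∀ v x, ¬ opp v x x
  plump2 : ∀ v x y, adj v x → adj v y → ∃ z, adj v z ∧ opp v z x ∧ opp v z y

namespace VeldkampGraph

variable {V : Type*} (Γ : VeldkampGraph V)

/-- `p 0, p 1, ..., p s` is an `s`-path. -/
def IsPath (s : ℕ) (p : ℕ → V) : Prop :=
  (∀ i, i < s → Γ.adj (p i) (p (i + 1))) ∧ ∀ i, i + 2 ≤ s → p i ≠ p (i + 2)

/-- `p 0, ..., p s` is a straight `s`-path. -/
def IsStraight (s : ℕ) (p : ℕ → V) : Prop :=
  Γ.IsPath s p ∧ ∀ i, i + 2 ≤ s → Γ.opp (p (i + 1)) (p i) (p (i + 2))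

/-- There is an `s`-path from `x` to `y`. -/
def HasPathLen (s : ℕ) (x y : V) : Prop :=
  ∃ p : ℕ → V, Γ.IsPath s p ∧ p 0 = x ∧ p s = y

/-- `dist (x, y) = k`. -/
def DistEq (x y : V) (k : ℕ) : Prop :=
  Γ.HasPathLen k x y ∧ ∀ j < k, ¬ Γ.HasPathLen j x y

def Connected : Prop := ∀ x y : V, ∃ s, Γ.HasPathLen s x y

def Bipartite : Prop := ∃ P : Set V, ∀ u v, Γ.adj u v → (u ∈ P ↔ v ∉ P)

/-- A straight `m`-circuit, encoded as an `m`-periodic straight closed walk. -/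
def IsClosedStraight (m : ℕ) (q : ℕ → V) : Prop :=
  (∀ i, Γ.adj (q i) (q (i + 1))) ∧ (∀ i, Γ.opp (q (i + 1)) (q i) (q (i + 2))) ∧
    ∀ i, q (i + m) = q i

/-- An `m`-circuit: an `m`-periodic closed walk through `m` distinct vertices. -/
def IsCircuit (m : ℕ) (q : ℕ → V) : Prop :=
  (∀ i, Γ.adj (q i) (q (i + 1))) ∧ (∀ i, q (i + m) = q i) ∧
    ∀ i j, i < m → j < m → q i = q j → i = j

end VeldkampGraph

/-- A Veldkamp `n`-gon. -/
structure VeldkampNGon (V : Type*) (n : ℕ) extends VeldkampGraph V where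
  two_le : 2 ≤ n
  connected : toVeldkampGraph.Connected
  bipartite : toVeldkampGraph.Bipartite
  vp2 : ∀ k, 1 ≤ k → k ≤ n - 1 → ∀ p j q, toVeldkampGraph.IsStraight k p →
    j ≤ k → toVeldkampGraph.IsStraight j q → q 0 = p 0 → q j = p k →
    j = k ∧ ∀ i ≤ k, q i = p i
  vp3 : ∀ p, toVeldkampGraph.IsStraight (n + 1) p →
    ∃ q, toVeldkampGraph.IsClosedStraight (2 * n) q ∧ ∀ i ≤ n + 1, q i = p i

namespace VeldkampNGon

variable {V : Type*} {n : ℕ} (Γ : VeldkampNGon V n)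

/-- Two vertices are opposite if there is a root (straight `n`-path) from one
to the other. -/
def Opp (x y : V) : Prop :=
  ∃ p, Γ.IsStraight n p ∧ p 0 = x ∧ p n = y

/-- The set of vertices opposite `x`. -/
def opSet (x : V) : Set V := {y | Γ.Opp x y}

/-- Two edges are opposite if some straight `(n+1)`-path has them as its first
and last edges. -/
def EdgeOpp (e f : Sym2 V) : Prop :=
  ∃ p, Γ.IsStraight (n + 1) p ∧ s(p 0, p 1) = e ∧ s(p n, p (n + 1)) = f

end VeldkampNGon

/-!
Two straight `(n+1)`-paths from a common vertex `v` can be rerooted simultaneously: close each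
to a straight `2n`-circuit (VP3) and pick, by 2-plumpness, a neighbour `ξ` of `v` opposite both
circuits' continuations past `v`; the other halves of the two circuits are straight `(n+1)`-paths
from the edge `{ξ, v}` to the two end edges. So it suffices to find a vertex from which straight
`(n+1)`-paths reach both `{a, b}` and `{c, d}`. Such a common source is carried along a walk from
`b` to `c` (and on to `d`): to move the second path's last edge `(x, y)` to `(y, z)`, reroot so
that the path ends with `(y, x)`, then choose `w` opposite `x` and `z` at `y` and use VP3 once more
to swing the last edge to `(y, z)`.
-/

namespace VeldkampGraph

variable {V : Type*} (Γ : VeldkampGraph V)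

theorem ne_of_opp {v x y : V} (h : Γ.opp v x y) : x ≠ y := by
  rintro rfl
  exact Γ.opp_irrefl v x h

variable {Γ}

theorem IsStraight.mono {s t : ℕ} {p : ℕ → V} (hp : Γ.IsStraight s p) (hts : t ≤ s) :
    Γ.IsStraight t p :=
  ⟨⟨fun i hi => hp.1.1 i (by omega), fun i hi => hp.1.2 i (by omega)⟩,
    fun i hi => hp.2 i (by omega)⟩

theorem IsStraight.adj_pred {s : ℕ} {p : ℕ → V} (hp : Γ.IsStraight s p) (hs : 1 ≤ s) :
    Γ.adj (p s) (p (s - 1)) := by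
  have h := hp.1.1 (s - 1) (by omega)
  rw [Nat.sub_add_cancel hs] at h
  exact Γ.adj_symm _ _ h

theorem isStraight_iff_opp {s : ℕ} {p : ℕ → V} (hs : 2 ≤ s) :
    Γ.IsStraight s p ↔ ∀ i, i + 2 ≤ s → Γ.opp (p (i + 1)) (p i) (p (i + 2)) := by
  refine ⟨fun hp => hp.2, fun h => ⟨⟨fun i hi => ?_, fun i hi => Γ.ne_of_opp (h i hi)⟩, h⟩⟩
  rcases Nat.lt_or_ge (i + 1) s with hi' | hi'
  · exact Γ.adj_symm _ _ (Γ.opp_adj_left _ _ _ (h i hi'))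
  · obtain ⟨j, rfl⟩ : ∃ j, i = j + 1 := ⟨i - 1, by omega⟩
    exact Γ.opp_adj_right _ _ _ (h j (by omega))

theorem IsStraight.reverse {s : ℕ} {p : ℕ → V} (hp : Γ.IsStraight s p) :
    Γ.IsStraight s (fun i => p (s - i)) := by
  obtain ⟨⟨hadj, hne⟩, hopp⟩ := hp
  refine ⟨⟨fun i hi => ?_, fun i hi => ?_⟩, fun i hi => ?_⟩ <;> beta_reduce
  · rw [show s - i = s - (i + 1) + 1 by omega]
    exact Γ.adj_symm _ _ (hadj _ (by omega))
  · rw [show s - i = s - (i + 2) + 2 by omega]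
    exact (hne _ (by omega)).symm
  · rw [show s - i = s - (i + 2) + 2 by omega, show s - (i + 1) = s - (i + 2) + 1 by omega]
    exact Γ.opp_symm _ _ _ (hopp _ (by omega))

theorem IsStraight.snoc {s : ℕ} {p : ℕ → V} {z : V} (hp : Γ.IsStraight s p) (hs : 1 ≤ s)
    (hz : Γ.opp (p s) (p (s - 1)) z) : Γ.IsStraight (s + 1) (Function.update p (s + 1) z) := by
  rw [isStraight_iff_opp (by omega)]
  intro i hi
  rcases Nat.lt_or_ge (i + 2) (s + 1) with hi' | hi'
  · rw [Function.update_of_ne (by omega), Function.update_of_ne (by omega),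
      Function.update_of_ne (by omega)]
    exact hp.2 i (by omega)
  · obtain rfl : i = s - 1 := by omega
    rw [Function.update_of_ne (by omega), Function.update_of_ne (by omega),
      show s - 1 + 2 = s + 1 by omega, Function.update_self, Nat.sub_add_cancel hs]
    exact hz

theorem IsStraight.update_zero {s : ℕ} {p : ℕ → V} {ξ : V} (hp : Γ.IsStraight s p)
    (hs : 2 ≤ s) (hξ : Γ.opp (p 1) ξ (p 2)) : Γ.IsStraight s (Function.update p 0 ξ) := by
  rw [isStraight_iff_opp hs]
  rintro (_ | i) hi
  · rwa [Function.update_self, Function.update_of_ne (by omega),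
      Function.update_of_ne (by omega)]
  · rw [Function.update_of_ne (by omega), Function.update_of_ne (by omega),
      Function.update_of_ne (by omega)]
    exact hp.2 _ hi

theorem IsClosedStraight.isStraight_shift {m : ℕ} {C : ℕ → V}
    (hC : Γ.IsClosedStraight m C) (k s : ℕ) : Γ.IsStraight s (fun i => C (k + i)) :=
  ⟨⟨fun i _ => hC.1 (k + i), fun i _ => Γ.ne_of_opp (hC.2.1 (k + i))⟩,
    fun i _ => hC.2.1 (k + i)⟩

variable (Γ)

theorem exists_isStraight_of_adj {a b : V} (hab : Γ.adj a b) {s : ℕ} (hs : 1 ≤ s) :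
    ∃ p, Γ.IsStraight s p ∧ p 0 = a ∧ p 1 = b := by
  induction s, hs using Nat.le_induction with
  | base =>
    refine ⟨fun i => if i = 0 then a else b, ⟨⟨fun i hi => ?_, fun i hi => by omega⟩,
      fun i hi => by omega⟩, rfl, rfl⟩
    obtain rfl : i = 0 := by omega
    simpa using hab
  | succ s hs ih =>
    obtain ⟨p, hp, hp0, hp1⟩ := ih
    obtain ⟨z, -, hz, -⟩ := Γ.plump2 _ _ _ (hp.adj_pred hs) (hp.adj_pred hs)
    refine ⟨_, hp.snoc hs (Γ.opp_symm _ _ _ hz), ?_, ?_⟩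
    · rwa [Function.update_of_ne (by omega)]
    · rwa [Function.update_of_ne (by omega)]

end VeldkampGraph

namespace VeldkampNGon

variable {V : Type*} {n : ℕ} (Γ : VeldkampNGon V n)

def DartOpp (u v x y : V) : Prop :=
  ∃ X, Γ.IsStraight (n + 1) X ∧ X 0 = u ∧ X 1 = v ∧ X n = x ∧ X (n + 1) = y

/-- Close the reverse of `P` to a straight `2n`-circuit and let `y` be the vertex after `P 0`;
any `ξ` opposite `y` at `P 0` starts the other half of the circuit, which leads back to
`P (n + 1)` and then `P n`. -/
theorem exists_reroot {P : ℕ → V} (hP : Γ.IsStraight (n + 1) P) :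
    ∃ y, Γ.adj (P 0) y ∧ ∀ ξ, Γ.opp (P 0) ξ y → Γ.DartOpp ξ (P 0) (P (n + 1)) (P n) := by
  have hn := Γ.two_le
  obtain ⟨C, hC, hCP⟩ := Γ.vp3 _ hP.reverse
  have hC0 : C 0 = P (n + 1) := by simpa using hCP 0 (by omega)
  have hC1 : C 1 = P n := by simpa using hCP 1 (by omega)
  have hCu : C (n + 1) = P 0 := by simpa using hCP (n + 1) le_rfl
  refine ⟨C (n + 2), hCu ▸ hC.1 (n + 1), fun ξ hξ => ⟨_,
    (hC.isStraight_shift n (n + 1)).update_zero (by omega) (by simpa [hCu] using hξ),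
    Function.update_self .., ?_, ?_, ?_⟩⟩
  · rw [Function.update_of_ne (by omega), hCu]
  · rw [Function.update_of_ne (by omega), show n + n = 0 + 2 * n by omega, hC.2.2, hC0]
  · rw [Function.update_of_ne (by omega), show n + (n + 1) = 1 + 2 * n by omega, hC.2.2, hC1]

/-- Choose `w` opposite both `Q (n - 1)` and `z` at `Q n`; the straight circuit through
`Q 0, …, Q n, w` returns from `w` to `Q 0`, and prefixing `z, Q n` gives the reversed path. -/
theorem exists_redirect_last_edge {Q : ℕ → V} (hQ : Γ.IsStraight (n + 1) Q) {z : V}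
    (hz : Γ.adj (Q n) z) :
    ∃ R, Γ.IsStraight (n + 1) R ∧ R 0 = Q 0 ∧ R n = Q n ∧ R (n + 1) = z := by
  have hn := Γ.two_le
  have hQn := hQ.mono n.le_succ
  obtain ⟨w, -, hw, hwz⟩ := Γ.plump2 _ _ _ (hQn.adj_pred (by omega)) hz
  obtain ⟨C, hC, hCQ⟩ := Γ.vp3 _ (hQn.snoc (by omega) (Γ.opp_symm _ _ _ hw))
  have hC0 : C 0 = Q 0 := by rw [hCQ 0 (by omega), Function.update_of_ne (by omega)]
  have hCn : C n = Q n := by rw [hCQ n (by omega), Function.update_of_ne (by omega)]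
  have hCw : C (n + 1) = w := by rw [hCQ (n + 1) le_rfl, Function.update_self]
  have hR := ((hC.isStraight_shift (n - 1) (n + 1)).update_zero (ξ := z) (by omega) (by
    rw [show n - 1 + 1 = n by omega, show n - 1 + 2 = n + 1 by omega, hCn, hCw]
    exact Γ.opp_symm _ _ _ hwz)).reverse
  refine ⟨_, hR, ?_, ?_, ?_⟩
  · rw [Function.update_of_ne (by omega), show n - 1 + (n + 1 - 0) = 0 + 2 * n by omega,
      hC.2.2, hC0]
  · rw [Function.update_of_ne (by omega), show n - 1 + (n + 1 - n) = n by omega, hCn]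
  · rw [Nat.sub_self, Function.update_self]

theorem exists_common_reroot {P M : ℕ → V} (hP : Γ.IsStraight (n + 1) P)
    (hM : Γ.IsStraight (n + 1) M) (h0 : P 0 = M 0) :
    ∃ ξ, Γ.DartOpp ξ (P 0) (P (n + 1)) (P n) ∧ Γ.DartOpp ξ (P 0) (M (n + 1)) (M n) := by
  obtain ⟨y, hy, hPy⟩ := Γ.exists_reroot hP
  obtain ⟨y', hy', hMy'⟩ := Γ.exists_reroot hM
  rw [← h0] at hy' hMy'
  obtain ⟨ξ, -, hξy, hξy'⟩ := Γ.plump2 _ _ _ hy hy'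
  exact ⟨ξ, hPy ξ hξy, hMy' ξ hξy'⟩

def CommonSource (e : Sym2 V) (x y : V) : Prop :=
  ∃ P M, Γ.IsStraight (n + 1) P ∧ Γ.IsStraight (n + 1) M ∧ P 0 = M 0 ∧
    s(P n, P (n + 1)) = e ∧ M n = x ∧ M (n + 1) = y

theorem commonSource_self {a b : V} (hab : Γ.adj a b) : Γ.CommonSource s(a, b) a b := by
  obtain ⟨p, hp, hp0, hp1⟩ :=
    Γ.exists_isStraight_of_adj (Γ.adj_symm _ _ hab) (s := n + 1) (by omega)
  have hn : n + 1 - n = 1 := by omega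
  exact ⟨_, _, hp.reverse, hp.reverse, rfl, by simp [hn, hp0, hp1], by simp [hn, hp1],
    by simp [hp0]⟩

variable {Γ}

theorem DartOpp.adj {u v x y : V} (h : Γ.DartOpp u v x y) : Γ.adj u v := by
  obtain ⟨X, hX, rfl, rfl, -, -⟩ := h
  exact hX.1.1 0 (by omega)

theorem DartOpp.edgeOpp {u v x y : V} (h : Γ.DartOpp u v x y) :
    Γ.EdgeOpp s(u, v) s(x, y) := by
  obtain ⟨X, hX, rfl, rfl, rfl, rfl⟩ := h
  exact ⟨X, hX, rfl, rfl⟩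

theorem CommonSource.step {e : Sym2 V} {x y z : V} (h : Γ.CommonSource e x y)
    (hyz : Γ.adj y z) : Γ.CommonSource e y z := by
  obtain ⟨P, M, hP, hM, h0, hPe, rfl, rfl⟩ := h
  obtain ⟨ξ, ⟨X, hX, hX0, -, hXn, hXn1⟩, ⟨Y, hY, hY0, -, hYn, -⟩⟩ :=
    Γ.exists_common_reroot hP hM h0
  obtain ⟨R, hR, hR0, hRn, hRz⟩ := Γ.exists_redirect_last_edge hY (hYn ▸ hyz)
  refine ⟨X, R, hX, hR, hX0.trans (hR0.trans hY0).symm, ?_, hRn.trans hYn, hRz⟩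
  rw [hXn, hXn1, Sym2.eq_swap, hPe]

theorem CommonSource.walk {e : Sym2 V} {x : V} {m : ℕ} {p : ℕ → V}
    (h : Γ.CommonSource e x (p 0)) (hp : ∀ i < m, Γ.adj (p i) (p (i + 1))) :
    ∃ x', Γ.CommonSource e x' (p m) := by
  induction m with
  | zero => exact ⟨x, h⟩
  | succ m ih =>
    obtain ⟨x', hx'⟩ := ih fun i hi => hp i (by omega)
    exact ⟨p m, hx'.step (hp m (by omega))⟩

end VeldkampNGon

/-- In a Veldkamp `n`-gon, for any two edges `{a,b}` and `{c,d}` there exists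
an edge opposite to both of them. -/
theorem stmt1 {V : Type*} {n : ℕ} (Γ : VeldkampNGon V n) (a b c d : V)
    (h1 : Γ.adj a b) (h2 : Γ.adj c d) :
    ∃ u v : V, Γ.adj u v ∧ Γ.EdgeOpp s(u, v) s(a, b) ∧ Γ.EdgeOpp s(u, v) s(c, d) := by
  obtain ⟨m, p, ⟨hp, -⟩, rfl, rfl⟩ := Γ.connected b c
  obtain ⟨x, hx⟩ := (Γ.commonSource_self h1).walk hp
  obtain ⟨P, M, hP, hM, h0, hPe, hMc, hMd⟩ := hx.step h2
  obtain ⟨ξ, hX, hY⟩ := Γ.exists_common_reroot hP hM h0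
  refine ⟨ξ, P 0, hX.adj, ?_, ?_⟩
  · rw [← hPe, Sym2.eq_swap (a := P n)]
    exact hX.edgeOpp
  · rw [← hMc, ← hMd, Sym2.eq_swap (a := M n)]
    exact hY.edgeOpp
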